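/- arXiv:2204.07843 — 5 statements merged into one kernel-verified Lean document; each statement's English description precedes it below -/
import Mathlib

section
/- The degenerate r-Whitney numbers of the first kind satisfy V_{m,mλ}^{(r)}(n,k) = Σ_{i=k}^{n} C(i,k) m^{n−i} S_{1,λ}(n,i) (−r)_{i−k, mλ}, where S_{1,λ} are the degenerate Stirling numbers of the first kind. -/
open Finset

/-- generalized falling factorial: (x)_{n,λ} = x(x-λ)···(x-(n-1)λ) -/
def dff (lam x : ℝ) (n : ℕ) : ℝ := ∏ i ∈ Finset.range n, (x - i * lam)

/-- generalized rising factorial: ⟨x⟩_{n,λ} = x(x+λ)···(x+(n-1)λ) -/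
def drf (lam x : ℝ) (n : ℕ) : ℝ := ∏ i ∈ Finset.range n, (x + i * lam)

/-!
Scaling gives `m ^ i * (x)_{i,λ} = (m x)_{i,mλ}`, and the degenerate Vandermonde identity expands
`(m x)_{i,mλ} = ((m x + r) + (-r))_{i,mλ}` in the `(m x + r)_{j,mλ}`; collecting coefficients
yields the right-hand side. Since `m ≠ 0`, `m x + r` runs over all reals, and the coefficients of
such an expansion are unique because `y ↦ (y)_{j,μ}` is a polynomial of degree `j`.
-/

lemma dff_succ (lam x : ℝ) (n : ℕ) : dff lam x (n + 1) = dff lam x n * (x - n * lam) :=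
  prod_range_succ _ n

lemma dff_mul_mul (c lam x : ℝ) (n : ℕ) : dff (c * lam) (c * x) n = c ^ n * dff lam x n := by
  calc ∏ i ∈ range n, (c * x - i * (c * lam)) = ∏ i ∈ range n, c * (x - i * lam) :=
        prod_congr rfl fun _ _ => by ring
    _ = c ^ n * dff lam x n := by rw [prod_mul_distrib, prod_const, card_range, dff]

lemma dff_add_antidiagonal (lam a b : ℝ) (n : ℕ) :
    dff lam (a + b) n =
      ∑ ij ∈ antidiagonal n, (n.choose ij.1 : ℝ) * (dff lam a ij.1 * dff lam b ij.2) := by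
  induction n with
  | zero => simp [dff]
  | succ n ih =>
    rw [dff_succ, ih, sum_antidiagonal_choose_succ_mul fun i j => dff lam a i * dff lam b j,
      ← sum_add_distrib, sum_mul]
    refine sum_congr rfl fun ij hij => ?_
    have hn : n = ij.1 + ij.2 := (mem_antidiagonal.mp hij).symm
    have hn' : (n : ℝ) = ij.1 + ij.2 := mod_cast hn
    rw [← Nat.choose_symm_of_eq_add hn, dff_succ, dff_succ, hn']
    ring

lemma dff_add (lam a b : ℝ) (n : ℕ) :
    dff lam (a + b) n =
      ∑ k ∈ range (n + 1), (n.choose k : ℝ) * (dff lam a k * dff lam b (n - k)) := by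
  rw [dff_add_antidiagonal, Nat.sum_antidiagonal_eq_sum_range_succ
    (fun i j => (n.choose i : ℝ) * (dff lam a i * dff lam b j))]

open Polynomial in
noncomputable def dffSequence (lam : ℝ) : Polynomial.Sequence ℝ where
  elems' n := ∏ i ∈ range n, (X - C ((i : ℝ) * lam))
  degree_eq' n := by simp only [degree_prod, degree_X_sub_C, sum_const, card_range, nsmul_one]

open Polynomial in
lemma eval_dffSequence (lam y : ℝ) (n : ℕ) : (dffSequence lam n).eval y = dff lam y n := by
  simp [dffSequence, dff, eval_prod]

lemma coeff_eq_of_sum_mul_dff_eq {lam : ℝ} {n : ℕ} {a b : ℕ → ℝ}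
    (h : ∀ y, ∑ k ∈ range (n + 1), a k * dff lam y k = ∑ k ∈ range (n + 1), b k * dff lam y k) :
    ∀ k ∈ range (n + 1), a k = b k := by
  have hzero : ∑ k ∈ range (n + 1), (a k - b k) • dffSequence lam k = 0 :=
    Polynomial.funext fun y => by
      simp [Polynomial.eval_finsetSum, eval_dffSequence, sub_mul, sum_sub_distrib, h]
  intro k hk
  exact sub_eq_zero.mp
    (linearIndependent_iff'.mp (dffSequence lam).linearIndependent _ _ hzero k hk)

lemma pow_mul_dff_one_eq_sum (m lam r : ℝ) (S1 : ℕ → ℝ) (n : ℕ) (x : ℝ)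
    (hS1 : dff 1 x n = ∑ k ∈ range (n + 1), S1 k * dff lam x k) :
    m ^ n * dff 1 x n = ∑ j ∈ range (n + 1),
      (∑ i ∈ Icc j n, (i.choose j : ℝ) * m ^ (n - i) * S1 i * dff (m * lam) (-r) (i - j)) *
        dff (m * lam) (m * x + r) j := by
  have hterm : ∀ i ∈ range (n + 1), m ^ n * (S1 i * dff lam x i) =
      ∑ j ∈ range (i + 1), (i.choose j : ℝ) * m ^ (n - i) * S1 i * dff (m * lam) (-r) (i - j) *
        dff (m * lam) (m * x + r) j := by
    intro i hi
    have hvand : dff (m * lam) (m * x) i = ∑ j ∈ range (i + 1),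
        (i.choose j : ℝ) * (dff (m * lam) (m * x + r) j * dff (m * lam) (-r) (i - j)) := by
      have h := dff_add (m * lam) (m * x + r) (-r) i
      rwa [add_neg_cancel_right] at h
    calc m ^ n * (S1 i * dff lam x i) = m ^ (n - i) * S1 i * dff (m * lam) (m * x) i := by
          rw [dff_mul_mul, ← pow_sub_mul_pow m (Nat.lt_succ_iff.mp (mem_range.mp hi))]
          ring
      _ = _ := by
          rw [hvand, mul_sum]
          exact sum_congr rfl fun j _ => by ring
  rw [hS1, mul_sum, sum_congr rfl hterm,
    sum_comm' (t' := range (n + 1)) (s' := fun j => Icc j n) (by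
      intro i j
      simp only [mem_range, mem_Icc]
      omega)]
  simp only [sum_mul]

theorem stmt4 (m : ℕ) (hm : 0 < m) (r : ℕ) (lam : ℝ) (V S1 : ℕ → ℕ → ℝ)
    (hV : ∀ n : ℕ, ∀ x : ℝ,
      (m : ℝ) ^ n * dff 1 x n = ∑ k ∈ range (n + 1), V n k * dff ((m : ℝ) * lam) ((m : ℝ) * x + r) k)
    (hS1 : ∀ n : ℕ, ∀ x : ℝ,
      dff 1 x n = ∑ k ∈ range (n + 1), S1 n k * dff lam x k) :
    ∀ n k : ℕ, k ≤ n →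
      V n k = ∑ i ∈ Finset.Icc k n,
        (i.choose k : ℝ) * (m : ℝ) ^ (n - i) * S1 n i * dff ((m : ℝ) * lam) (-(r : ℝ)) (i - k) := by
  intro n k hk
  have hm' : (m : ℝ) ≠ 0 := Nat.cast_ne_zero.mpr hm.ne'
  have hx : ∀ y : ℝ, (m : ℝ) * ((y - r) / m) + r = y := fun y => by
    rw [mul_div_cancel₀ _ hm', sub_add_cancel]
  have hcoeff := fun y : ℝ => (hV n ((y - r) / m)).symm.trans
    (pow_mul_dff_one_eq_sum _ _ r _ _ _ (hS1 n ((y - r) / m)))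
  simp only [hx] at hcoeff
  exact coeff_eq_of_sum_mul_dff_eq hcoeff k (mem_range.mpr (Nat.lt_succ_of_le hk))
end

section
/- The unsigned degenerate r-Stirling numbers of the first kind satisfy [n+r, k+r]_{r,λ} = Σ_{i=k}^{n} (−1)^{i−k} (−r)_{i−k,λ} · [n,i]_λ · C(i,k), where [n,i]_λ are the degenerate unsigned Stirling numbers of the first kind defined by ⟨x⟩_n = Σ_{i=0}^n [n,i]_λ ⟨x⟩_{i,λ}. -/
open Finset

/-!
Expanding `⟨x + r⟩_n` first by the defining relation of `[n, i]_λ` evaluated at `x + r`, and then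
each `⟨x + r⟩_{i,λ}` by the Vandermonde identity
`⟨x + y⟩_{i,λ} = ∑_j C(i, j) ⟨x⟩_{j,λ} ⟨y⟩_{i-j,λ}`, writes `⟨x + r⟩_n` in the basis `⟨x⟩_{j,λ}`
of polynomials in `x` (one of each degree `j`, hence linearly independent). Comparing with the defining relation of `[n + r, k + r]_{r,λ}` gives the coefficients, and
`⟨r⟩_{m,λ} = (-1)^m (-r)_{m,λ}`.
-/

open Polynomial

lemma drf_succ (lam x : ℝ) (n : ℕ) : drf lam x (n + 1) = drf lam x n * (x + n * lam) :=
  prod_range_succ _ n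

lemma dff_neg (lam x : ℝ) (m : ℕ) : dff lam (-x) m = (-1) ^ m * drf lam x m := by
  rw [dff, drf, ← card_range m, ← prod_const, card_range, ← prod_mul_distrib]
  exact prod_congr rfl fun i _ => by ring

lemma drf_add (lam x y : ℝ) (n : ℕ) :
    drf lam (x + y) n
      = ∑ ij ∈ antidiagonal n, (n.choose ij.1 : ℝ) * (drf lam x ij.1 * drf lam y ij.2) := by
  induction n with
  | zero => simp [drf]
  | succ n ih =>
    rw [sum_antidiagonal_choose_succ_mul (fun i j => drf lam x i * drf lam y j), drf_succ, ih,
      sum_mul, ← sum_add_distrib]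
    refine sum_congr rfl fun ij hij => ?_
    rw [HasAntidiagonal.mem_antidiagonal] at hij
    have hn : (n : ℝ) = ij.1 + ij.2 := by exact_mod_cast hij.symm
    rw [← Nat.choose_symm_of_eq_add hij.symm, drf_succ, drf_succ, hn]
    ring

lemma sum_mul_drf_add (lam x y : ℝ) (a : ℕ → ℝ) (n : ℕ) :
    ∑ i ∈ range (n + 1), a i * drf lam (x + y) i
      = ∑ j ∈ range (n + 1),
          (∑ i ∈ Icc j n, a i * (i.choose j : ℝ) * drf lam y (i - j)) * drf lam x j := by
  simp_rw [drf_add, Nat.sum_antidiagonal_eq_sum_range_succ_mk, mul_sum, sum_mul]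
  rw [sum_comm' (t' := range (n + 1)) (s' := fun j => Icc j n)
    (fun i j => by simp only [mem_range, mem_Icc]; omega)]
  exact sum_congr rfl fun j _ => sum_congr rfl fun i _ => by ring

noncomputable def drfSeq (lam : ℝ) : Polynomial.Sequence ℝ where
  elems' n := ∏ i ∈ range n, (X + C ((i : ℝ) * lam))
  degree_eq' n := by
    rw [degree_prod]
    simp only [degree_X_add_C, sum_const, card_range, nsmul_one]

lemma eval_drfSeq (lam x : ℝ) (n : ℕ) : (drfSeq lam n).eval x = drf lam x n := by
  simp [drfSeq, drf, eval_prod]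

lemma eq_of_sum_mul_drf_eq (lam : ℝ) {s : Finset ℕ} {a b : ℕ → ℝ}
    (h : ∀ x, ∑ k ∈ s, a k * drf lam x k = ∑ k ∈ s, b k * drf lam x k) :
    ∀ k ∈ s, a k = b k := by
  have hzero : ∑ k ∈ s, (a k - b k) • drfSeq lam k = 0 :=
    Polynomial.funext fun x => by
      simp [eval_finsetSum, eval_drfSeq, sub_mul, sum_sub_distrib, h x]
  intro k hk
  exact sub_eq_zero.mp (linearIndependent_iff'.mp (drfSeq lam).linearIndependent s _ hzero k hk)

theorem stmt6 (r : ℕ) (lam : ℝ) (Str St : ℕ → ℕ → ℝ)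
    (hStr : ∀ n : ℕ, ∀ x : ℝ,
      drf 1 (x + r) n = ∑ k ∈ range (n + 1), Str n k * drf lam x k)
    (hSt : ∀ n : ℕ, ∀ x : ℝ,
      drf 1 x n = ∑ i ∈ range (n + 1), St n i * drf lam x i) :
    ∀ n k : ℕ, k ≤ n →
      Str n k = ∑ i ∈ Finset.Icc k n,
        (-1 : ℝ) ^ (i - k) * dff lam (-(r : ℝ)) (i - k) * St n i * (i.choose k : ℝ) := by
  intro n k hk
  have hexpand : ∀ x : ℝ, ∑ j ∈ range (n + 1), Str n j * drf lam x j
      = ∑ j ∈ range (n + 1),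
          (∑ i ∈ Icc j n, St n i * (i.choose j : ℝ) * drf lam r (i - j)) * drf lam x j := by
    intro x
    rw [← hStr, hSt, sum_mul_drf_add]
  rw [eq_of_sum_mul_drf_eq lam hexpand k (mem_range.mpr (Nat.lt_succ_of_le hk))]
  refine sum_congr rfl fun i _ => ?_
  rw [dff_neg, ← mul_assoc, ← pow_add, Even.neg_one_pow ⟨_, rfl⟩]
  ring
end

section
/- The degenerate r-Stirling numbers of the second kind satisfy {n+r, k+r}_{r,λ} = Σ_{i=k}^{n} C(n,i) (r)_{n−i,λ} S_{2,λ}(i,k). -/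
/-
Expanding `(x + r)_{n,λ}` by the degenerate Vandermonde identity
`(x + y)_{n,λ} = ∑ C(n,i) (x)_{i,λ} (y)_{n-i,λ}` and then each `(x)_{i,λ}` in the falling
factorial basis gives an expansion of `(x + r)_{n,λ}` in that basis with the claimed
coefficients. Coefficients in the basis `(x)_k` are unique, as one sees by evaluating at
`x = 0, 1, 2, …`, where the basis is triangular.
-/

open Finset

theorem dff_add_s7 (lam x y : ℝ) (n : ℕ) :
    dff lam (x + y) n =
      ∑ ij ∈ antidiagonal n, (n.choose ij.1 : ℝ) * (dff lam x ij.1 * dff lam y ij.2) := by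
  induction n with
  | zero => simp [dff]
  | succ n ih =>
    rw [dff_succ, ih, sum_mul, sum_antidiagonal_choose_succ_mul
      (fun i j => dff lam x i * dff lam y j), ← sum_add_distrib]
    refine sum_congr rfl fun ij hij => ?_
    have hn : (n : ℝ) = ij.1 + ij.2 := by exact_mod_cast (mem_antidiagonal.1 hij).symm
    rw [Nat.choose_symm_of_eq_add (mem_antidiagonal.1 hij).symm, dff_succ, dff_succ, hn]
    ring

lemma dff_one_natCast_of_lt {j k : ℕ} (h : j < k) : dff 1 (j : ℝ) k = 0 :=
  prod_eq_zero (mem_range.2 h) (by simp)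

lemma dff_one_natCast_self_ne_zero (j : ℕ) : dff 1 (j : ℝ) j ≠ 0 :=
  prod_ne_zero_iff.2 fun i hi => by
    have : (i : ℝ) < j := by exact_mod_cast mem_range.1 hi
    linarith

theorem eq_zero_of_sum_mul_dff_one_eq_zero {m : ℕ} {c : ℕ → ℝ}
    (h : ∀ x : ℝ, ∑ k ∈ range m, c k * dff 1 x k = 0) {k : ℕ} (hk : k < m) : c k = 0 := by
  induction k using Nat.strong_induction_on with
  | _ j ih =>
    have hj := h j
    rw [sum_eq_single_of_mem j (mem_range.2 hk) fun b hb hbj => by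
      rcases lt_or_gt_of_ne hbj with hbj | hbj
      · rw [ih b hbj (mem_range.1 hb), zero_mul]
      · rw [dff_one_natCast_of_lt hbj, mul_zero]] at hj
    exact (mul_eq_zero.1 hj).resolve_right (dff_one_natCast_self_ne_zero j)

theorem coeff_eq_of_sum_mul_dff_one_eq {m : ℕ} {a b : ℕ → ℝ}
    (h : ∀ x : ℝ, ∑ k ∈ range m, a k * dff 1 x k = ∑ k ∈ range m, b k * dff 1 x k)
    {k : ℕ} (hk : k < m) : a k = b k :=
  sub_eq_zero.1 <| eq_zero_of_sum_mul_dff_one_eq_zero (c := fun k => a k - b k)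
    (fun x => by simp only [sub_mul, sum_sub_distrib, h, sub_self]) hk

theorem dff_add_eq_sum_dff_one {lam : ℝ} {S2 : ℕ → ℕ → ℝ}
    (hS2 : ∀ n : ℕ, ∀ x : ℝ, dff lam x n = ∑ k ∈ range (n + 1), S2 n k * dff 1 x k)
    (x y : ℝ) (n : ℕ) :
    dff lam (x + y) n = ∑ k ∈ range (n + 1),
      (∑ i ∈ Icc k n, (n.choose i : ℝ) * dff lam y (n - i) * S2 i k) * dff 1 x k := by
  calc dff lam (x + y) n
      = ∑ i ∈ range (n + 1), ∑ k ∈ range (i + 1),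
          (n.choose i : ℝ) * dff lam y (n - i) * S2 i k * dff 1 x k := by
        rw [dff_add_s7, Nat.sum_antidiagonal_eq_sum_range_succ
          (fun i j => (n.choose i : ℝ) * (dff lam x i * dff lam y j))]
        refine sum_congr rfl fun i _ => ?_
        rw [hS2 i x, sum_mul, mul_sum]
        exact sum_congr rfl fun k _ => by ring
    _ = ∑ k ∈ range (n + 1), ∑ i ∈ Icc k n,
          (n.choose i : ℝ) * dff lam y (n - i) * S2 i k * dff 1 x k :=
        sum_comm' fun i k => by simp only [mem_range, mem_Icc]; omega
    _ = _ := by simp only [sum_mul]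

theorem stmt7 (r : ℕ) (lam : ℝ) (Str2 S2 : ℕ → ℕ → ℝ)
    (hStr2 : ∀ n : ℕ, ∀ x : ℝ,
      dff lam (x + r) n = ∑ k ∈ range (n + 1), Str2 n k * dff 1 x k)
    (hS2 : ∀ n : ℕ, ∀ x : ℝ,
      dff lam x n = ∑ k ∈ range (n + 1), S2 n k * dff 1 x k) :
    ∀ n k : ℕ, k ≤ n →
      Str2 n k = ∑ i ∈ Finset.Icc k n,
        (n.choose i : ℝ) * dff lam (r : ℝ) (n - i) * S2 i k := by
  intro n k hk
  refine coeff_eq_of_sum_mul_dff_one_eq (a := Str2 n)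
    (b := fun k => ∑ i ∈ Icc k n, (n.choose i : ℝ) * dff lam r (n - i) * S2 i k)
    (fun x => ?_) (Nat.lt_succ_of_le hk)
  rw [← hStr2, dff_add_eq_sum_dff_one hS2]
end

section
/- The degenerate r-Whitney numbers satisfy the orthogonality relations: for all n ≥ j ≥ 0, Σ_{k=j}^{n} W_{m,λ}^{(r)}(n,k) V_{m,λ}^{(r)}(k,j) = δ_{n,j} and Σ_{k=j}^{n} V_{m,λ}^{(r)}(n,k) W_{m,λ}^{(r)}(k,j) = δ_{n,j}, where δ is the Kronecker delta. -/
/-!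
Both families `k ↦ (m x + r)_{k,λ}` and `k ↦ m^k (x)_k` are products of `k` nonconstant linear
factors in `x`, hence polynomial sequences (the `k`-th term has degree `k`) and so linearly
independent functions of `x`. `W` and `V` are the two triangular change-of-basis matrices between
them; substituting one expansion into the other and comparing coefficients shows that the
products `W V` and `V W` are the identity.
-/

open Finset

open Polynomial

section LinearFactors

variable {K : Type*} [CommRing K] [IsDomain K]

noncomputable def Polynomial.Sequence.prodLinear (a b : ℕ → K) (ha : ∀ i, a i ≠ 0) :
    Polynomial.Sequence K where
  elems' k := ∏ i ∈ range k, (C (a i) * X - C (b i))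
  degree_eq' k := by simp [degree_prod, sub_eq_add_neg, ← C_neg, degree_linear (ha _), -map_neg]

theorem linearIndependent_prod_linear [Infinite K] (a b : ℕ → K) (ha : ∀ i, a i ≠ 0) :
    LinearIndependent K fun k (x : K) => ∏ i ∈ range k, (a i * x - b i) := by
  let ev : K[X] →ₗ[K] K → K := LinearMap.pi fun x => leval x
  have hev : LinearMap.ker ev = ⊥ :=
    LinearMap.ker_eq_bot.mpr fun p q h => Polynomial.funext fun x => congrFun h x
  have hfun : (fun k (x : K) => ∏ i ∈ range k, (a i * x - b i))
      = ev ∘ Polynomial.Sequence.prodLinear a b ha := by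
    funext k x
    simp [ev, Polynomial.Sequence.prodLinear, eval_prod]
  rw [hfun]
  exact (Polynomial.Sequence.prodLinear a b ha).linearIndependent.map' ev hev

end LinearFactors

theorem sum_Icc_mul_eq_ite_of_linearIndependent {K M : Type*} [CommRing K] [AddCommGroup M]
    [Module K M] {P Q : ℕ → M} {A B : ℕ → ℕ → K}
    (hP : ∀ n, P n = ∑ k ∈ range (n + 1), A n k • Q k)
    (hQ : ∀ n, Q n = ∑ k ∈ range (n + 1), B n k • P k)
    (hind : LinearIndependent K P) {n j : ℕ} (hjn : j ≤ n) :
    ∑ k ∈ Icc j n, A n k * B k j = if n = j then 1 else 0 := by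
  have hexp : ∑ i ∈ range (n + 1), (∑ k ∈ Icc i n, A n k * B k i) • P i
      = ∑ i ∈ range (n + 1), (if n = i then (1 : K) else 0) • P i := by
    simp_rw [ite_smul, one_smul, zero_smul]
    rw [sum_ite_eq, if_pos (self_mem_range_succ n), hP n]
    simp_rw [hQ, smul_sum, smul_smul, sum_smul]
    exact sum_comm' fun k i => by simp only [mem_range, mem_Icc]; omega
  exact linearIndependent_iff'ₛ.mp hind _ _ _ hexp j (mem_range_succ_iff.mpr hjn)

lemma dff_mul_add (lam a b x : ℝ) (n : ℕ) :
    dff lam (a * x + b) n = ∏ i ∈ range n, (a * x - (i * lam - b)) := by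
  simp only [dff, sub_sub_eq_add_sub, add_sub_assoc]

lemma pow_mul_dff (lam a x : ℝ) (n : ℕ) :
    a ^ n * dff lam x n = ∏ i ∈ range n, (a * x - a * (i * lam)) := by
  have := pow_card_mul_prod (s := range n) (f := fun i : ℕ => x - i * lam) (b := a)
  rw [card_range] at this
  simp only [dff, this, mul_sub]

theorem stmt16 (m : ℕ) (hm : 0 < m) (r : ℕ) (lam : ℝ) (V W : ℕ → ℕ → ℝ)
    (hW : ∀ n : ℕ, ∀ x : ℝ,
      dff lam ((m : ℝ) * x + r) n = ∑ k ∈ range (n + 1), W n k * (m : ℝ) ^ k * dff 1 x k)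
    (hV : ∀ n : ℕ, ∀ x : ℝ,
      (m : ℝ) ^ n * dff 1 x n = ∑ k ∈ range (n + 1), V n k * dff lam ((m : ℝ) * x + r) k) :
    ∀ n j : ℕ, j ≤ n →
      (∑ k ∈ Finset.Icc j n, W n k * V k j) = (if n = j then (1 : ℝ) else 0) ∧
      (∑ k ∈ Finset.Icc j n, V n k * W k j) = (if n = j then (1 : ℝ) else 0) := by
  have hm0 : (m : ℝ) ≠ 0 := by positivity
  set P : ℕ → ℝ → ℝ := fun k x => dff lam (m * x + r) k with hPdef
  set Q : ℕ → ℝ → ℝ := fun k x => m ^ k * dff 1 x k with hQdef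
  have hPQ : ∀ n, P n = ∑ k ∈ range (n + 1), W n k • Q k := fun n => by
    funext x
    simp [P, Q, hW, mul_assoc]
  have hQP : ∀ n, Q n = ∑ k ∈ range (n + 1), V n k • P k := fun n => by
    funext x
    simp [P, Q, hV]
  have hPind : LinearIndependent ℝ P := by
    simpa only [hPdef, dff_mul_add] using
      linearIndependent_prod_linear (fun _ => (m : ℝ)) (fun i => i * lam - r) fun _ => hm0
  have hQind : LinearIndependent ℝ Q := by
    simpa only [hQdef, pow_mul_dff] using
      linearIndependent_prod_linear (fun _ => (m : ℝ)) (fun i => m * (i * 1)) fun _ => hm0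
  exact fun n j hjn => ⟨sum_Icc_mul_eq_ite_of_linearIndependent hPQ hQP hPind hjn,
    sum_Icc_mul_eq_ite_of_linearIndependent hQP hPQ hQind hjn⟩
end

section
/- For all n ≥ i ≥ 0, W_{m,λ}^{(r)}(n,i) = (1/(m^i · i!)) Σ_{k=0}^{i} C(i,k) (−1)^{i−k} (mk + r)_{n,λ}. -/
open Finset

/-!
Evaluating the defining identity at `x = k ∈ ℕ`, where `(k)_j = j! * C(k, j)`, expands
`k ↦ (mk + r)_{n,λ}` in the binomial basis `k ↦ C(k, j)` with coefficients `W(n, j) m^j j!`.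
The `i`-th forward difference at `0` extracts the `i`-th coefficient, and it is the
alternating sum on the right-hand side.
-/

lemma dff_one_eq_descPochhammer_eval (x : ℝ) (j : ℕ) : dff 1 x j = (descPochhammer ℝ j).eval x := by
  simp [dff, descPochhammer_eval_eq_prod_range]

lemma dff_one_natCast (k j : ℕ) : dff 1 (k : ℝ) j = j.factorial * k.choose j := by
  rw [dff_one_eq_descPochhammer_eval, descPochhammer_eval_eq_descFactorial,
    Nat.descFactorial_eq_factorial_mul_choose, Nat.cast_mul]

lemma sum_range_alternating_choose_mul_choose {R : Type*} [Ring R] (i j : ℕ) :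
    ∑ k ∈ range (i + 1), (i.choose k : R) * (-1) ^ (i - k) * k.choose j =
      if i = j then 1 else 0 := by
  have h := congrArg (Int.cast : ℤ → R) (fwdDiff_iter_choose_zero j i)
  rw [fwdDiff_iter_eq_sum_shift] at h
  simp only [smul_eq_mul, zero_add, mul_one] at h
  push_cast at h
  rw [← h]
  exact sum_congr rfl fun k _ => congrArg (· * _) ((Nat.cast_commute _ _).eq)

lemma sum_range_alternating_choose_mul_of_eq_sum_choose {R : Type*} [CommRing R]
    {f : ℕ → R} {c : ℕ → R} {n : ℕ} (hf : ∀ k, f k = ∑ j ∈ range (n + 1), c j * k.choose j)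
    {i : ℕ} (hi : i ≤ n) :
    ∑ k ∈ range (i + 1), (i.choose k : R) * (-1) ^ (i - k) * f k = c i := by
  simp_rw [hf, mul_sum]
  rw [sum_comm]
  simp_rw [mul_comm (c _), ← mul_assoc, ← sum_mul, sum_range_alternating_choose_mul_choose,
    ite_mul, one_mul, zero_mul]
  rw [sum_ite_eq, if_pos (mem_range.2 (Nat.lt_succ_of_le hi))]

theorem stmt18 (m : ℕ) (hm : 0 < m) (r : ℕ) (lam : ℝ) (W : ℕ → ℕ → ℝ)
    (hW : ∀ n : ℕ, ∀ x : ℝ,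
      dff lam ((m : ℝ) * x + r) n = ∑ i ∈ range (n + 1), W n i * (m : ℝ) ^ i * dff 1 x i) :
    ∀ n i : ℕ, i ≤ n →
      W n i = (1 / ((m : ℝ) ^ i * (i.factorial : ℝ))) *
        ∑ k ∈ range (i + 1), (i.choose k : ℝ) * (-1 : ℝ) ^ (i - k) *
          dff lam ((m : ℝ) * k + r) n := by
  intro n i hin
  have hexpand (k : ℕ) : dff lam ((m : ℝ) * k + r) n =
      ∑ j ∈ range (n + 1), W n j * (m : ℝ) ^ j * j.factorial * k.choose j := by
    simp_rw [hW n k, dff_one_natCast, mul_assoc]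
  rw [sum_range_alternating_choose_mul_of_eq_sum_choose hexpand hin]
  have hmi : (m : ℝ) ^ i ≠ 0 := pow_ne_zero _ (by exact_mod_cast hm.ne')
  have hfact : (i.factorial : ℝ) ≠ 0 := by exact_mod_cast i.factorial_ne_zero
  field_simp
end
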